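/- Let Q and H be symmetric positive semidefinite real n×n matrices and C > 0 a constant such that (1/C)⟨Qξ,ξ⟩ ≤ ⟨Hξ,ξ⟩ ≤ C⟨Qξ,ξ⟩ for all ξ ∈ ℝⁿ. Let p > 1, a > 1, γ > 1, ψ > 1, δ > 1 be constants and b, c, d, e, f, g, h ≥ 0 real numbers. Suppose A : ℝ×ℝⁿ → ℝⁿ, Ã : ℝ×ℝⁿ → ℝⁿ and B : ℝ×ℝⁿ → ℝ satisfy, for all (z,ξ) ∈ ℝ×ℝⁿ: A(z,ξ) = √Q·Ã(z,ξ); ξ·A(z,ξ) ≥ a⁻¹|√Q·ξ|^p − h|z|^γ − g; |Ã(z,ξ)| ≤ a|√Q·ξ|^{p−1} + b|z|^{γ−1} + e; and |B(z,ξ)| ≤ c|√Q·ξ|^{ψ−1} + d|z|^{δ−1} + f. Then there exists Â : ℝ×ℝⁿ → ℝⁿ such that for all (z,ξ) ∈ ℝ×ℝⁿ: A(z,ξ) = √H·Â(z,ξ); ξ·A(z,ξ) ≥ (C^{p/2}a)⁻¹|√H·ξ|^p − h|z|^γ − g; |Â(z,ξ)| ≤ C^{p/2}a|√H·ξ|^{p−1}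 + C^{1/2}b|z|^{γ−1} + C^{1/2}e; and |B(z,ξ)| ≤ C^{(ψ−1)/2}c|√H·ξ|^{ψ−1} + d|z|^{δ−1} + f. That is, the structural conditions are invariant under replacing Q by an equivalent symmetric nonnegative semidefinite matrix H, with constants modified by powers of C. -/

import Mathlib

/-!
Since `⟨Qξ, ξ⟩ = |√Q ξ|²`, the equivalence of the quadratic forms says exactly that
`|√H ξ| ≤ √C |√Q ξ|` and `|√Q ξ| ≤ √C |√H ξ|`; raising these to the powers `p`, `p - 1` and
`ψ - 1` transforms the coercivity condition and the bound on `B`. The new field `Â` has to solve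
`√H Â = √Q Ã` with `|Â| ≤ √C |Ã|`: this is Douglas' factorization lemma for the self-adjoint
maps `√Q` and `√H`, whose minimal-norm solution `Â = √H x` lies in the range of `√H`.
-/

open Matrix

/-- The positive semidefinite square root of a positive semidefinite matrix
(removed from Mathlib; restored with its December 2024 definition). -/
noncomputable def Matrix.PosSemidef.sqrt {n : Type*} [Fintype n] [DecidableEq n]
    {A : Matrix n n ℝ} (hA : A.PosSemidef) : Matrix n n ℝ :=
  hA.1.eigenvectorUnitary.1 * diagonal ((↑) ∘ (fun x : ℝ => Real.sqrt x) ∘ hA.1.eigenvalues) *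
  (star hA.1.eigenvectorUnitary : Matrix n n ℝ)

/-- The Euclidean norm of a vector in `ℝⁿ`, written via the dot product. -/
noncomputable def euclNorm {n : ℕ} (x : Fin n → ℝ) : ℝ := Real.sqrt (x ⬝ᵥ x)

open scoped InnerProductSpace

namespace LinearMap

variable {𝕜 E F G : Type*} [RCLike 𝕜] [NormedAddCommGroup E] [NormedAddCommGroup F]
  [NormedAddCommGroup G] [InnerProductSpace 𝕜 E] [InnerProductSpace 𝕜 F] [InnerProductSpace 𝕜 G]
  [FiniteDimensional 𝕜 E] [FiniteDimensional 𝕜 F] [FiniteDimensional 𝕜 G]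

theorem exists_adjoint_apply_eq_and_norm_le {S : E →ₗ[𝕜] F} {T : E →ₗ[𝕜] G} {K : ℝ}
    (hK : 0 ≤ K) (hST : ∀ x, ‖S x‖ ≤ K * ‖T x‖) (w : F) :
    ∃ v, T.adjoint v = S.adjoint w ∧ ‖v‖ ≤ K * ‖w‖ := by
  have hker : ker T ≤ ker S := fun x hx => by
    simpa [mem_ker.mp hx] using hST x
  have hrange : range S.adjoint ≤ range (T.adjoint ∘ₗ T) := by
    rw [range_adjoint_comp_self, ← orthogonal_ker, ← orthogonal_ker]
    exact Submodule.orthogonal_le hker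
  obtain ⟨x, hx⟩ := hrange (mem_range_self _ w)
  refine ⟨T x, hx, ?_⟩
  have key : ‖T x‖ * ‖T x‖ ≤ K * ‖w‖ * ‖T x‖ := calc
    ‖T x‖ * ‖T x‖ = RCLike.re ⟪S x, w⟫_𝕜 := by
      rw [← adjoint_inner_right, ← hx, comp_apply, adjoint_inner_right, inner_self_eq_norm_mul_norm]
    _ ≤ ‖S x‖ * ‖w‖ := re_inner_le_norm _ _
    _ ≤ K * ‖T x‖ * ‖w‖ := by gcongr; exact hST x
    _ = K * ‖w‖ * ‖T x‖ := by ring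
  rcases (norm_nonneg (T x)).eq_or_lt with h0 | hpos
  · rw [← h0]; positivity
  · exact le_of_mul_le_mul_right key hpos

end LinearMap

lemma Real.rpow_le_rpow_div_two_mul_of_le_sqrt_mul {x y K r : ℝ} (hx : 0 ≤ x) (hy : 0 ≤ y)
    (hK : 0 ≤ K) (hr : 0 ≤ r) (hxy : x ≤ √K * y) : x ^ r ≤ K ^ (r / 2) * y ^ r := calc
  x ^ r ≤ (√K * y) ^ r := Real.rpow_le_rpow hx hxy hr
  _ = K ^ (r / 2) * y ^ r := by
    rw [Real.mul_rpow (Real.sqrt_nonneg K) hy, Real.sqrt_eq_rpow, ← Real.rpow_mul hK,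
      one_div_mul_eq_div]

namespace Matrix.PosSemidef

variable {m : Type*} [Fintype m] [DecidableEq m] {A : Matrix m m ℝ} (hA : A.PosSemidef)

lemma posSemidef_sqrt : hA.sqrt.PosSemidef := by
  unfold Matrix.PosSemidef.sqrt
  have hD : (diagonal ((↑) ∘ (fun x : ℝ => Real.sqrt x) ∘ hA.1.eigenvalues) :
      Matrix m m ℝ).PosSemidef :=
    posSemidef_diagonal_iff.mpr fun i => Real.sqrt_nonneg _
  simpa [star_eq_conjTranspose] using
    hD.mul_mul_conjTranspose_same (hA.1.eigenvectorUnitary : Matrix m m ℝ)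

lemma sqrt_mul_self : hA.sqrt * hA.sqrt = A := by
  unfold Matrix.PosSemidef.sqrt
  have hU : (star hA.1.eigenvectorUnitary : Matrix m m ℝ) * hA.1.eigenvectorUnitary.1 = 1 :=
    Unitary.coe_star_mul_self _
  have hDD : (diagonal ((↑) ∘ (fun x : ℝ => Real.sqrt x) ∘ hA.1.eigenvalues) : Matrix m m ℝ) *
      diagonal ((↑) ∘ (fun x : ℝ => Real.sqrt x) ∘ hA.1.eigenvalues) =
      diagonal (RCLike.ofReal ∘ hA.1.eigenvalues) := by
    rw [diagonal_mul_diagonal]; congr 1; funext i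
    simp [Real.mul_self_sqrt (hA.eigenvalues_nonneg i)]
  conv_rhs => rw [hA.1.spectral_theorem, Unitary.conjStarAlgAut_apply]
  simp only [mul_assoc]
  rw [← mul_assoc (star hA.1.eigenvectorUnitary : Matrix m m ℝ) hA.1.eigenvectorUnitary.1, hU,
    one_mul, ← mul_assoc (diagonal _) (diagonal _), hDD]

lemma transpose_sqrt : hA.sqrtᵀ = hA.sqrt := by
  simpa [IsHermitian, conjTranspose_eq_transpose_of_trivial] using hA.posSemidef_sqrt.1

lemma sqrt_mulVec_dotProduct_self (x : m → ℝ) :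
    hA.sqrt *ᵥ x ⬝ᵥ hA.sqrt *ᵥ x = A *ᵥ x ⬝ᵥ x := by
  rw [dotProduct_mulVec, ← mulVec_transpose, hA.transpose_sqrt, mulVec_mulVec, hA.sqrt_mul_self]

end Matrix.PosSemidef

lemma euclNorm_nonneg {n : ℕ} (x : Fin n → ℝ) : 0 ≤ euclNorm x := Real.sqrt_nonneg _

lemma euclNorm_eq_norm {n : ℕ} (x : Fin n → ℝ) : euclNorm x = ‖WithLp.toLp 2 x‖ := by
  rw [EuclideanSpace.norm_eq, euclNorm, dotProduct]
  simp [sq]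

namespace Matrix.PosSemidef

variable {n : ℕ} {A B : Matrix (Fin n) (Fin n) ℝ} (hA : A.PosSemidef) (hB : B.PosSemidef)

lemma euclNorm_sqrt_mulVec (x : Fin n → ℝ) :
    euclNorm (hA.sqrt *ᵥ x) = √(A *ᵥ x ⬝ᵥ x) := by
  rw [euclNorm, hA.sqrt_mulVec_dotProduct_self]

lemma euclNorm_sqrt_mulVec_le {K : ℝ} (hK : 0 ≤ K)
    (hAB : ∀ x, A *ᵥ x ⬝ᵥ x ≤ K * (B *ᵥ x ⬝ᵥ x)) (x : Fin n → ℝ) :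
    euclNorm (hA.sqrt *ᵥ x) ≤ √K * euclNorm (hB.sqrt *ᵥ x) := by
  rw [hA.euclNorm_sqrt_mulVec, hB.euclNorm_sqrt_mulVec, ← Real.sqrt_mul hK]
  exact Real.sqrt_le_sqrt (hAB x)

lemma euclNorm_sqrt_mulVec_rpow_le {K r : ℝ} (hK : 0 ≤ K) (hr : 0 ≤ r)
    (hAB : ∀ x, A *ᵥ x ⬝ᵥ x ≤ K * (B *ᵥ x ⬝ᵥ x)) (x : Fin n → ℝ) :
    euclNorm (hA.sqrt *ᵥ x) ^ r ≤ K ^ (r / 2) * euclNorm (hB.sqrt *ᵥ x) ^ r :=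
  Real.rpow_le_rpow_div_two_mul_of_le_sqrt_mul (euclNorm_nonneg _) (euclNorm_nonneg _) hK hr
    (hA.euclNorm_sqrt_mulVec_le hB hK hAB x)

lemma exists_sqrt_mulVec_eq_and_euclNorm_le {K : ℝ} (hK : 0 ≤ K)
    (hAB : ∀ x, A *ᵥ x ⬝ᵥ x ≤ K * (B *ᵥ x ⬝ᵥ x)) (w : Fin n → ℝ) :
    ∃ u, hB.sqrt *ᵥ u = hA.sqrt *ᵥ w ∧ euclNorm u ≤ √K * euclNorm w := by
  obtain ⟨v, hv, hvw⟩ := LinearMap.exists_adjoint_apply_eq_and_norm_le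
    (S := toEuclideanLin hA.sqrt) (T := toEuclideanLin hB.sqrt) (Real.sqrt_nonneg K)
    (fun x => by
      simpa only [toLpLin_apply, ← euclNorm_eq_norm] using
        hA.euclNorm_sqrt_mulVec_le hB hK hAB x.ofLp)
    (WithLp.toLp 2 w)
  rw [(isSymmetric_toEuclideanLin_iff.mpr hA.posSemidef_sqrt.1).adjoint_eq,
    (isSymmetric_toEuclideanLin_iff.mpr hB.posSemidef_sqrt.1).adjoint_eq] at hv
  exact ⟨v.ofLp, congrArg WithLp.ofLp hv, by simpa [euclNorm_eq_norm] using hvw⟩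

end Matrix.PosSemidef

theorem stmt13_general {n : ℕ} (Q H : Matrix (Fin n) (Fin n) ℝ)
    (hQ : Q.PosSemidef) (hH : H.PosSemidef) (C : ℝ) (hC : 0 < C)
    (hequiv : ∀ ξ : Fin n → ℝ,
      (1 / C) * (Q.mulVec ξ ⬝ᵥ ξ) ≤ H.mulVec ξ ⬝ᵥ ξ ∧
        H.mulVec ξ ⬝ᵥ ξ ≤ C * (Q.mulVec ξ ⬝ᵥ ξ))
    (p a γ ψ δ : ℝ) (hp : 1 < p) (ha : 1 < a) (hψ : 1 < ψ)
    (b c d e f g h : ℝ) (hc : 0 ≤ c)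
    (A Atil : ℝ → (Fin n → ℝ) → (Fin n → ℝ)) (B : ℝ → (Fin n → ℝ) → ℝ)
    (hstr1 : ∀ (z : ℝ) (ξ : Fin n → ℝ), A z ξ = hQ.sqrt.mulVec (Atil z ξ))
    (hstr2 : ∀ (z : ℝ) (ξ : Fin n → ℝ),
      a⁻¹ * euclNorm (hQ.sqrt.mulVec ξ) ^ p - h * |z| ^ γ - g ≤ ξ ⬝ᵥ A z ξ)
    (hstr3 : ∀ (z : ℝ) (ξ : Fin n → ℝ),
      euclNorm (Atil z ξ) ≤ a * euclNorm (hQ.sqrt.mulVec ξ) ^ (p - 1) + b * |z| ^ (γ - 1) + e)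
    (hstr4 : ∀ (z : ℝ) (ξ : Fin n → ℝ),
      |B z ξ| ≤ c * euclNorm (hQ.sqrt.mulVec ξ) ^ (ψ - 1) + d * |z| ^ (δ - 1) + f) :
    ∃ Ahat : ℝ → (Fin n → ℝ) → (Fin n → ℝ),
      (∀ (z : ℝ) (ξ : Fin n → ℝ), A z ξ = hH.sqrt.mulVec (Ahat z ξ)) ∧
      (∀ (z : ℝ) (ξ : Fin n → ℝ),
        (C ^ (p / 2) * a)⁻¹ * euclNorm (hH.sqrt.mulVec ξ) ^ p - h * |z| ^ γ - g ≤
          ξ ⬝ᵥ A z ξ) ∧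
      (∀ (z : ℝ) (ξ : Fin n → ℝ),
        euclNorm (Ahat z ξ) ≤
          C ^ (p / 2) * a * euclNorm (hH.sqrt.mulVec ξ) ^ (p - 1) +
            C ^ ((1 : ℝ) / 2) * b * |z| ^ (γ - 1) + C ^ ((1 : ℝ) / 2) * e) ∧
      (∀ (z : ℝ) (ξ : Fin n → ℝ),
        |B z ξ| ≤
          C ^ ((ψ - 1) / 2) * c * euclNorm (hH.sqrt.mulVec ξ) ^ (ψ - 1) +
            d * |z| ^ (δ - 1) + f) := by
  have hQH : ∀ ξ, Q *ᵥ ξ ⬝ᵥ ξ ≤ C * (H *ᵥ ξ ⬝ᵥ ξ) := fun ξ => by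
    simpa only [one_div, inv_mul_le_iff₀ hC] using (hequiv ξ).1
  have hHQ : ∀ ξ, H *ᵥ ξ ⬝ᵥ ξ ≤ C * (Q *ᵥ ξ ⬝ᵥ ξ) := fun ξ => (hequiv ξ).2
  have ha0 : 0 ≤ a := zero_le_one.trans ha.le
  choose Ahat hAhat hAhat_le using
    fun z ξ => hQ.exists_sqrt_mulVec_eq_and_euclNorm_le hH hC.le hQH (Atil z ξ)
  refine ⟨Ahat, fun z ξ => (hstr1 z ξ).trans (hAhat z ξ).symm, fun z ξ => ?_, fun z ξ => ?_,
    fun z ξ => ?_⟩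
  · have hCp : 0 < C ^ (p / 2) := Real.rpow_pos_of_pos hC _
    have hH_le := hH.euclNorm_sqrt_mulVec_rpow_le hQ hC.le (by linarith : 0 ≤ p) hHQ ξ
    have : (C ^ (p / 2) * a)⁻¹ * euclNorm (hH.sqrt *ᵥ ξ) ^ p ≤
        a⁻¹ * euclNorm (hQ.sqrt *ᵥ ξ) ^ p := by
      rw [_root_.mul_inv_rev, mul_assoc]
      exact mul_le_mul_of_nonneg_left ((inv_mul_le_iff₀ hCp).2 hH_le) (inv_nonneg.2 ha0)
    linarith [hstr2 z ξ]
  · have hQ_le := hQ.euclNorm_sqrt_mulVec_rpow_le hH hC.le (by linarith : 0 ≤ p - 1) hQH ξ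
    have hexp : C ^ ((1 : ℝ) / 2) * C ^ ((p - 1) / 2) = C ^ (p / 2) := by
      rw [← Real.rpow_add hC]; congr 1; ring
    calc euclNorm (Ahat z ξ) ≤ √C * euclNorm (Atil z ξ) := hAhat_le z ξ
      _ ≤ √C * (a * (C ^ ((p - 1) / 2) * euclNorm (hH.sqrt *ᵥ ξ) ^ (p - 1)) +
            b * |z| ^ (γ - 1) + e) := by
        gcongr
        linarith [hstr3 z ξ, mul_le_mul_of_nonneg_left hQ_le ha0]
      _ = _ := by rw [Real.sqrt_eq_rpow, ← hexp]; ring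
  · have hQ_le := hQ.euclNorm_sqrt_mulVec_rpow_le hH hC.le (by linarith : 0 ≤ ψ - 1) hQH ξ
    linarith [hstr4 z ξ, mul_le_mul_of_nonneg_left hQ_le hc]

/-- The structural conditions are invariant under replacing `Q` by an
equivalent symmetric nonnegative semidefinite matrix `H`, with constants modified by powers
of the equivalence constant `C`. -/
theorem stmt13 {n : ℕ} (Q H : Matrix (Fin n) (Fin n) ℝ)
    (hQ : Q.PosSemidef) (hH : H.PosSemidef) (C : ℝ) (hC : 0 < C)
    (hequiv : ∀ ξ : Fin n → ℝ,
      (1 / C) * (Q.mulVec ξ ⬝ᵥ ξ) ≤ H.mulVec ξ ⬝ᵥ ξ ∧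
        H.mulVec ξ ⬝ᵥ ξ ≤ C * (Q.mulVec ξ ⬝ᵥ ξ))
    (p a γ ψ δ : ℝ) (hp : 1 < p) (ha : 1 < a) (hγ : 1 < γ) (hψ : 1 < ψ) (hδ : 1 < δ)
    (b c d e f g h : ℝ) (hb : 0 ≤ b) (hc : 0 ≤ c) (hd : 0 ≤ d) (he : 0 ≤ e)
    (hf : 0 ≤ f) (hg : 0 ≤ g) (hh : 0 ≤ h)
    (A Atil : ℝ → (Fin n → ℝ) → (Fin n → ℝ)) (B : ℝ → (Fin n → ℝ) → ℝ)
    (hstr1 : ∀ (z : ℝ) (ξ : Fin n → ℝ), A z ξ = hQ.sqrt.mulVec (Atil z ξ))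
    (hstr2 : ∀ (z : ℝ) (ξ : Fin n → ℝ),
      a⁻¹ * euclNorm (hQ.sqrt.mulVec ξ) ^ p - h * |z| ^ γ - g ≤ ξ ⬝ᵥ A z ξ)
    (hstr3 : ∀ (z : ℝ) (ξ : Fin n → ℝ),
      euclNorm (Atil z ξ) ≤ a * euclNorm (hQ.sqrt.mulVec ξ) ^ (p - 1) + b * |z| ^ (γ - 1) + e)
    (hstr4 : ∀ (z : ℝ) (ξ : Fin n → ℝ),
      |B z ξ| ≤ c * euclNorm (hQ.sqrt.mulVec ξ) ^ (ψ - 1) + d * |z| ^ (δ - 1) + f) :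
    ∃ Ahat : ℝ → (Fin n → ℝ) → (Fin n → ℝ),
      (∀ (z : ℝ) (ξ : Fin n → ℝ), A z ξ = hH.sqrt.mulVec (Ahat z ξ)) ∧
      (∀ (z : ℝ) (ξ : Fin n → ℝ),
        (C ^ (p / 2) * a)⁻¹ * euclNorm (hH.sqrt.mulVec ξ) ^ p - h * |z| ^ γ - g ≤
          ξ ⬝ᵥ A z ξ) ∧
      (∀ (z : ℝ) (ξ : Fin n → ℝ),
        euclNorm (Ahat z ξ) ≤
          C ^ (p / 2) * a * euclNorm (hH.sqrt.mulVec ξ) ^ (p - 1) +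
            C ^ ((1 : ℝ) / 2) * b * |z| ^ (γ - 1) + C ^ ((1 : ℝ) / 2) * e) ∧
      (∀ (z : ℝ) (ξ : Fin n → ℝ),
        |B z ξ| ≤
          C ^ ((ψ - 1) / 2) * c * euclNorm (hH.sqrt.mulVec ξ) ^ (ψ - 1) +
            d * |z| ^ (δ - 1) + f) :=
  stmt13_general Q H hQ hH C hC hequiv p a γ ψ δ hp ha hψ b c d e f g h hc A Atil B hstr1 hstr2
    hstr3 hstr4
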